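/- Let n ≥ 3 be an integer and α, β, γ, δ real numbers, and let A : (0,1) → ℝ be defined by A(ρ) := (1/(1−ρ))·( −(2n+δ)/(n(n−1)) + (δ−γ)ρ/(n(n+1)) + γρ²/((n+1)(n+2)) + α ρ^{−n} + β ρ^{−n+1} ). Then A is twice differentiable on (0,1) and for every ρ ∈ (0,1) it satisfies the second-order linear ODE ρ²·A''(ρ) + 2(n − ρ/(1−ρ))·ρ·A'(ρ) + (n(n−1) − 2nρ/(1−ρ))·A(ρ) + 2n/(1−ρ) + γρ + δ = 0. -/

import Mathlib

/-- The general solution A(ρ) of the reduced extremal equation. -/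
noncomputable def Asol (n : ℕ) (α β γ δ : ℝ) (ρ : ℝ) : ℝ :=
  (1 / (1 - ρ)) * (-(2 * (n : ℝ) + δ) / ((n : ℝ) * ((n : ℝ) - 1))
    + (δ - γ) * ρ / ((n : ℝ) * ((n : ℝ) + 1))
    + γ * ρ ^ 2 / (((n : ℝ) + 1) * ((n : ℝ) + 2))
    + α / ρ ^ n + β / ρ ^ (n - 1))

/-!
Write `A = G / (1 - ρ)` with `G` the Laurent polynomial in the bracket. Multiplying by
`(1 - ρ)⁻¹` conjugates the operator of the ODE into the Euler operator
`ρ² G'' + 2nρ G' + n(n-1) G`, which acts on `ρ^k` as multiplication by `(k + n)(k + n - 1)`.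
It therefore kills `ρ^(-n)` and `ρ^(1-n)` and maps the polynomial part of `G` to
`-(2n + δ) + (δ - γ)ρ + γρ²`, after which the equation is a one-line identity.
-/

open Filter Topology

theorem hasDerivAt_deriv_of_eventually {f f' : ℝ → ℝ} {f'' x : ℝ}
    (hf : ∀ᶠ y in 𝓝 x, HasDerivAt f (f' y) y) (hf' : HasDerivAt f' f'' x) :
    HasDerivAt (deriv f) f'' x :=
  hf'.congr_of_eventuallyEq (hf.mono fun _ hy => hy.deriv)

section LaurentSum

variable {ι : Type*} (s : Finset ι) (c : ι → ℝ) (e : ι → ℤ)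

theorem hasDerivAt_sum_mul_zpow {x : ℝ} (hx : x ≠ 0) :
    HasDerivAt (fun y => ∑ i ∈ s, c i * y ^ e i) (∑ i ∈ s, c i * e i * x ^ (e i - 1)) x :=
  HasDerivAt.fun_sum fun i _ => by
    simpa only [mul_assoc] using (hasDerivAt_zpow (e i) x (Or.inl hx)).const_mul (c i)

theorem hasDerivAt_sum_mul_zpow_two {x : ℝ} (hx : x ≠ 0) :
    HasDerivAt (fun y => ∑ i ∈ s, c i * e i * y ^ (e i - 1))
      (∑ i ∈ s, c i * e i * (e i - 1) * x ^ (e i - 1 - 1)) x := by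
  simpa using hasDerivAt_sum_mul_zpow s (fun i => c i * e i) (fun i => e i - 1) hx

theorem euler_sum_mul_zpow (n : ℝ) {x : ℝ} (hx : x ≠ 0) :
    x ^ 2 * ∑ i ∈ s, c i * e i * (e i - 1) * x ^ (e i - 1 - 1)
      + 2 * n * x * ∑ i ∈ s, c i * e i * x ^ (e i - 1)
      + n * (n - 1) * ∑ i ∈ s, c i * x ^ e i
      = ∑ i ∈ s, c i * ((e i + n) * (e i + n - 1)) * x ^ e i := by
  simp only [Finset.mul_sum, ← Finset.sum_add_distrib]
  refine Finset.sum_congr rfl fun i _ => ?_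
  have hpow (k : ℤ) : x ^ k = x ^ (k - 1) * x := by
    rw [← zpow_add_one₀ hx, sub_add_cancel]
  rw [hpow (e i), hpow (e i - 1)]
  ring

end LaurentSum

theorem hasDerivAt_inv_one_sub_mul {g : ℝ → ℝ} {g' x : ℝ} (hx : x ≠ 1)
    (hg : HasDerivAt g g' x) :
    HasDerivAt (fun y => (1 - y)⁻¹ * g y) ((1 - x)⁻¹ * ((1 - x)⁻¹ * g x + g')) x := by
  have hx' : 1 - x ≠ 0 := sub_ne_zero.mpr hx.symm
  have hinv : HasDerivAt (fun y => (1 - y)⁻¹) ((1 - x)⁻¹ ^ 2) x := by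
    refine (((hasDerivAt_id' x).const_sub 1).fun_inv hx').congr_deriv ?_
    rw [inv_pow, neg_neg, div_eq_mul_inv, one_mul]
  exact (hinv.mul hg).congr_deriv (by ring)

/-- Since `f' = (1 - x)⁻¹ * (f + g')` has the same shape as `f`, differentiating it again
gives `f'' = (1 - x)⁻¹ * (2 f' + g'')`. -/
theorem hasDerivAt_deriv_inv_one_sub_mul {g g' : ℝ → ℝ} {g'' x : ℝ} (hx : x ≠ 1)
    (hg : ∀ᶠ y in 𝓝 x, HasDerivAt g (g' y) y) (hg' : HasDerivAt g' g'' x) :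
    HasDerivAt (fun y => (1 - y)⁻¹ * g y) ((1 - x)⁻¹ * ((1 - x)⁻¹ * g x + g' x)) x ∧
    HasDerivAt (deriv fun y => (1 - y)⁻¹ * g y)
      ((1 - x)⁻¹ * (2 * ((1 - x)⁻¹ * ((1 - x)⁻¹ * g x + g' x)) + g'')) x := by
  have hf : ∀ᶠ y in 𝓝 x, HasDerivAt (fun y => (1 - y)⁻¹ * g y)
      ((1 - y)⁻¹ * ((1 - y)⁻¹ * g y + g' y)) y :=
    (hg.and (eventually_ne_nhds hx)).mono fun y ⟨hgy, hy⟩ => hasDerivAt_inv_one_sub_mul hy hgy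
  refine ⟨hf.self_of_nhds, hasDerivAt_deriv_of_eventually hf ?_⟩
  exact (hasDerivAt_inv_one_sub_mul hx (hf.self_of_nhds.fun_add hg')).congr_deriv (by ring)

theorem ode_operator_inv_one_sub_mul_eq_euler (n : ℝ) {ρ : ℝ} (hρ : ρ ≠ 1) (g g' g'' : ℝ) :
    ρ ^ 2 * ((1 - ρ)⁻¹ * (2 * ((1 - ρ)⁻¹ * ((1 - ρ)⁻¹ * g + g')) + g''))
      + 2 * (n - ρ / (1 - ρ)) * ρ * ((1 - ρ)⁻¹ * ((1 - ρ)⁻¹ * g + g'))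
      + (n * (n - 1) - 2 * n * ρ / (1 - ρ)) * ((1 - ρ)⁻¹ * g)
      = (1 - ρ)⁻¹ * (ρ ^ 2 * g'' + 2 * n * ρ * g' + n * (n - 1) * g) := by
  have : 1 - ρ ≠ 0 := sub_ne_zero.mpr hρ.symm
  field_simp
  ring

section Asol

variable (n : ℕ) (α β γ δ : ℝ)

def asolExponent : Fin 5 → ℤ := ![0, 1, 2, -n, 1 - n]

noncomputable def asolCoeff : Fin 5 → ℝ :=
  ![-(2 * (n : ℝ) + δ) / ((n : ℝ) * ((n : ℝ) - 1)), (δ - γ) / ((n : ℝ) * ((n : ℝ) + 1)),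
    γ / (((n : ℝ) + 1) * ((n : ℝ) + 2)), α, β]

theorem Asol_eq_inv_one_sub_mul_sum (hn : 1 ≤ n) :
    Asol n α β γ δ =
      fun ρ => (1 - ρ)⁻¹ * ∑ i, asolCoeff n α β γ δ i * ρ ^ asolExponent n i := by
  funext ρ
  have hpow : ρ ^ (1 - (n : ℤ)) = (ρ ^ (n - 1))⁻¹ := by
    rw [← zpow_natCast, Nat.cast_sub hn, ← zpow_neg, Nat.cast_one, neg_sub]
  rw [Asol, one_div, Fin.sum_univ_five]
  congr 1
  simp only [asolCoeff, asolExponent, Matrix.cons_val, hpow, zpow_neg, zpow_natCast, zpow_zero,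
    zpow_one, zpow_two]
  ring

theorem euler_asolCoeff (hn : 2 ≤ n) (ρ : ℝ) :
    ∑ i, asolCoeff n α β γ δ i
        * ((asolExponent n i + n) * (asolExponent n i + n - 1)) * ρ ^ asolExponent n i
      = -(2 * n + δ) + (δ - γ) * ρ + γ * ρ ^ 2 := by
  have hn' : (2 : ℝ) ≤ n := by exact_mod_cast hn
  have h0 : (n : ℝ) ≠ 0 := by linarith
  have h1 : (n : ℝ) - 1 ≠ 0 := by linarith
  have h2 : (n : ℝ) + 1 ≠ 0 := by linarith
  have h3 : (n : ℝ) + 2 ≠ 0 := by linarith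
  simp only [Fin.sum_univ_five, asolCoeff, asolExponent, Matrix.cons_val]
  push_cast
  field_simp
  ring

end Asol

/-- A is twice differentiable on (0,1) and satisfies the second-order linear ODE
ρ²A'' + 2(n − ρ/(1−ρ))ρA' + (n(n−1) − 2nρ/(1−ρ))A + 2n/(1−ρ) + γρ + δ = 0. -/
theorem Asol_solves_ODE (n : ℕ) (hn : 3 ≤ n) (α β γ δ : ℝ) :
    ∀ ρ ∈ Set.Ioo (0 : ℝ) 1,
      DifferentiableAt ℝ (Asol n α β γ δ) ρ ∧
      DifferentiableAt ℝ (deriv (Asol n α β γ δ)) ρ ∧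
      ρ ^ 2 * deriv (deriv (Asol n α β γ δ)) ρ
        + 2 * ((n : ℝ) - ρ / (1 - ρ)) * ρ * deriv (Asol n α β γ δ) ρ
        + ((n : ℝ) * ((n : ℝ) - 1) - 2 * (n : ℝ) * ρ / (1 - ρ)) * Asol n α β γ δ ρ
        + 2 * (n : ℝ) / (1 - ρ) + γ * ρ + δ = 0 := by
  rintro ρ ⟨hρ0, hρ1⟩
  set c := asolCoeff n α β γ δ
  set e := asolExponent n
  have hG : ∀ᶠ y in 𝓝 ρ, HasDerivAt (fun y => ∑ i, c i * y ^ e i)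
      (∑ i, c i * e i * y ^ (e i - 1)) y :=
    (eventually_ne_nhds hρ0.ne').mono fun y hy => hasDerivAt_sum_mul_zpow _ c e hy
  obtain ⟨hA', hA''⟩ := hasDerivAt_deriv_inv_one_sub_mul hρ1.ne hG
    (hasDerivAt_sum_mul_zpow_two _ c e hρ0.ne')
  rw [Asol_eq_inv_one_sub_mul_sum n α β γ δ (by omega)]
  refine ⟨hA'.differentiableAt, hA''.differentiableAt, ?_⟩
  rw [hA''.deriv, hA'.deriv, ode_operator_inv_one_sub_mul_eq_euler _ hρ1.ne,
    euler_sum_mul_zpow _ _ _ _ hρ0.ne', euler_asolCoeff n α β γ δ (by omega)]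
  have : 1 - ρ ≠ 0 := sub_ne_zero.mpr hρ1.ne'
  field_simp
  ring
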